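/- Let γ = √(κ² + 2σ²) with κ, θ, σ > 0, and A(u) = (2κθ/σ²)·log( 2γ e^{(κ+γ)u/2} / (2γ + (γ+κ)(e^{γu} − 1)) ). Then A(0) = 0, A(u) ≤ 0 for all u ≥ 0, and A solves A'(u) = −κθ B(u) where B(u) = 2(e^{γu} − 1)/(2γ + (γ+κ)(e^{γu} − 1)). -/

import Mathlib

/-!
Write `A = (2κθ/σ²) log (N/D)` with `N(u) = 2γ e^{(κ+γ)u/2}` and
`D(u) = 2γ + (γ+κ)(e^{γu} − 1) = (γ−κ) + (γ+κ)e^{γu}`. Since `|κ| ≤ γ`, the weights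
`(γ∓κ)/(2γ)` lie in `[0,1]`, and convexity of `exp` gives `N ≤ D`, so the logarithm is
nonpositive. Differentiating, `(log (N/D))' = (γ²−κ²)(1−e^{γu})/(2D)`, and
`γ² − κ² = 2σ²` turns `A'` into `−κθ B`.
-/

open Real

theorem exp_mul_le_one_sub_add {t : ℝ} (ht₀ : 0 ≤ t) (ht₁ : t ≤ 1) (x : ℝ) :
    exp (t * x) ≤ 1 - t + t * exp x := by
  have h := convexOn_exp.2 (Set.mem_univ x) (Set.mem_univ 0) ht₀ (sub_nonneg.2 ht₁)
    (add_sub_cancel t 1)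
  simpa [add_comm] using h

namespace CIR

noncomputable def denom (κ γ u : ℝ) : ℝ := 2 * γ + (γ + κ) * (exp (γ * u) - 1)

noncomputable def numer (κ γ u : ℝ) : ℝ := 2 * γ * exp ((κ + γ) * u / 2)

variable {κ γ : ℝ}

theorem denom_pos (hκγ : |κ| ≤ γ) (hγ : 0 < γ) (u : ℝ) : 0 < denom κ γ u := by
  obtain ⟨h₁, h₂⟩ := abs_le.1 hκγ
  have he := exp_pos (γ * u)
  unfold denom
  rcases le_total 1 (exp (γ * u)) with h | h <;> nlinarith

theorem numer_le_denom (hκγ : |κ| ≤ γ) (hγ : 0 < γ) (u : ℝ) :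
    numer κ γ u ≤ denom κ γ u := by
  obtain ⟨h₁, h₂⟩ := abs_le.1 hκγ
  set t := (γ + κ) / (2 * γ) with ht
  have ht₀ : 0 ≤ t := div_nonneg (by linarith) (by positivity)
  have ht₁ : t ≤ 1 := (div_le_one (by positivity)).2 (by linarith)
  have hexp : (κ + γ) * u / 2 = t * (γ * u) := by rw [ht]; field_simp; ring
  calc numer κ γ u = 2 * γ * exp (t * (γ * u)) := by rw [numer, hexp]
    _ ≤ 2 * γ * (1 - t + t * exp (γ * u)) := by
        gcongr; exact exp_mul_le_one_sub_add ht₀ ht₁ _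
    _ = denom κ γ u := by rw [ht, denom]; field_simp; ring

theorem log_numer_div_denom_nonpos (hκγ : |κ| ≤ γ) (hγ : 0 < γ) (u : ℝ) :
    log (numer κ γ u / denom κ γ u) ≤ 0 :=
  log_nonpos (div_nonneg (by unfold numer; positivity) (denom_pos hκγ hγ u).le)
    ((div_le_one (denom_pos hκγ hγ u)).2 (numer_le_denom hκγ hγ u))

theorem hasDerivAt_log_numer_div_denom (hγ : γ ≠ 0) {u : ℝ} (hD : denom κ γ u ≠ 0) :
    HasDerivAt (fun v => log (numer κ γ v / denom κ γ v))
      ((γ ^ 2 - κ ^ 2) * (1 - exp (γ * u)) / (2 * denom κ γ u)) u := by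
  have hN : HasDerivAt (numer κ γ) (2 * γ * (exp ((κ + γ) * u / 2) * ((κ + γ) * 1 / 2))) u :=
    (((hasDerivAt_id u).const_mul (κ + γ)).div_const 2).exp.const_mul (2 * γ)
  have hD' : HasDerivAt (denom κ γ) ((γ + κ) * (exp (γ * u) * (γ * 1))) u :=
    ((((hasDerivAt_id u).const_mul γ).exp.sub_const 1).const_mul (γ + κ)).const_add (2 * γ)
  have hNu : numer κ γ u ≠ 0 := by unfold numer; positivity
  refine ((hN.div hD' hD).log (div_ne_zero hNu hD)).congr_deriv ?_
  rw [Pi.div_apply]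
  unfold numer denom at *
  field_simp
  ring

end CIR

/-- With `γ = √(κ² + 2σ²)` and
`A u = (2κθ/σ²) log(2γ e^{(κ+γ)u/2} / (2γ + (γ+κ)(e^{γu} − 1)))`, we have `A 0 = 0`,
`A u ≤ 0` for all `u ≥ 0`, and `A' u = −κθ B u` where
`B u = 2(e^{γu} − 1)/(2γ + (γ+κ)(e^{γu} − 1))`. -/
theorem cir_A_props (κ θ σ : ℝ) (hκ : 0 < κ) (hθ : 0 < θ) (hσ : 0 < σ)
    (γ : ℝ) (hγ : γ = Real.sqrt (κ ^ 2 + 2 * σ ^ 2))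
    (A B : ℝ → ℝ)
    (hA : A = fun u => 2 * κ * θ / σ ^ 2 *
      Real.log (2 * γ * Real.exp ((κ + γ) * u / 2) /
        (2 * γ + (γ + κ) * (Real.exp (γ * u) - 1))))
    (hB : B = fun u => 2 * (Real.exp (γ * u) - 1) /
      (2 * γ + (γ + κ) * (Real.exp (γ * u) - 1))) :
    A 0 = 0 ∧ (∀ u ≥ (0 : ℝ), A u ≤ 0) ∧
      ∀ u : ℝ, HasDerivAt A (-(κ * θ) * B u) u := by
  have hA' : A = fun u => 2 * κ * θ / σ ^ 2 * log (CIR.numer κ γ u / CIR.denom κ γ u) := hA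
  have hγ_sq : γ ^ 2 = κ ^ 2 + 2 * σ ^ 2 := by rw [hγ, sq_sqrt (by positivity)]
  have hγ_pos : 0 < γ := by rw [hγ]; positivity
  have hκγ : |κ| ≤ γ := hγ ▸ abs_le_sqrt (by nlinarith)
  refine ⟨by simp [hA', CIR.numer, CIR.denom], fun u _ => ?_, fun u => ?_⟩
  · rw [hA']
    exact mul_nonpos_of_nonneg_of_nonpos (by positivity)
      (CIR.log_numer_div_denom_nonpos hκγ hγ_pos u)
  · have hD := CIR.denom_pos hκγ hγ_pos u
    rw [hA']
    refine ((CIR.hasDerivAt_log_numer_div_denom hγ_pos.ne' hD.ne').const_mul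
      (2 * κ * θ / σ ^ 2)).congr_deriv ?_
    rw [hB, hγ_sq]
    unfold CIR.denom at hD ⊢
    field_simp
    ring
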